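/- Let P ⊆ ℝ^d be a polytope with vertex set V and diameter D, let a ∈ ℝ^d be nonzero, fix a minimising vertex v_1 ∈ V* = V ∩ argmin{a·x : x ∈ P}, and let v ∈ V be a vertex whose gap Δ_v = a·(v − v_1) is positive. Then every nonzero vector u in the normal cone N_P(v) satisfies a·u/(‖a‖·‖u‖) ≥ (1/2)/(1 + D²‖a‖²/Δ_v²) − 1; in particular this lower bound θ_v on the cosine satisfies θ_v > −1, so φ_v = θ_v + 1 > 0. -/
import Mathlib


open scoped RealInnerProductSpace

/-- The normal cone to a convex set `X` at a point `v`. -/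
def normalCone {d : ℕ} (X : Set (EuclideanSpace ℝ (Fin d)))
    (v : EuclideanSpace ℝ (Fin d)) : Set (EuclideanSpace ℝ (Fin d)) :=
  {u | ∀ x ∈ X, ⟪u, x⟫ ≤ ⟪u, v⟫}

lemma cone_key (A Δ D R N lam : ℝ) (hA : 0 < A) (hΔ : 0 < Δ) (hN : 0 < N)
    (hR : 0 ≤ R) (hNsq : N^2 = lam^2*A^2 + R^2) (hmain : -(lam*Δ) ≤ R*D) :
    (1/2)/(1 + D^2*A^2/Δ^2) - 1 ≤ lam*A/N := by
  set K2 := D^2*A^2/Δ^2 with hK2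
  have hK2nn : 0 ≤ K2 := by rw [hK2]; positivity
  have hm : (0:ℝ) < 1 + K2 := by linarith
  rcases le_or_gt 0 lam with hl | hl
  · have h1 : (1/2)/(1+K2) ≤ 1 := by rw [div_le_one hm]; linarith
    have h2 : 0 ≤ lam*A/N := by
      apply div_nonneg (mul_nonneg hl hA.le) hN.le
    linarith
  · have hs : 0 < -lam*A := by nlinarith
    have h0 : (-(lam*Δ))*(-(lam*Δ)) ≤ (R*D)*(R*D) :=
      mul_self_le_mul_self (by nlinarith) hmain
    have hsK : lam^2*A^2 ≤ R^2 * K2 := by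
      rw [hK2, ← mul_div_assoc, le_div_iff₀ (by positivity : (0:ℝ) < Δ^2)]
      nlinarith [sq_nonneg A]
    have key2 : (-lam*A) * (2*(1+K2)) ≤ (1+2*K2) * N := by
      have hsqq : ((-lam*A) * (2*(1+K2)))^2 ≤ ((1+2*K2) * N)^2 := by
        nlinarith [hsK, hNsq, sq_nonneg R,
          mul_nonneg (show (0:ℝ) ≤ 3+4*K2 by linarith) (sub_nonneg.mpr hsK),
          mul_nonneg hK2nn hK2nn]
      exact le_of_pow_le_pow_left₀ two_ne_zero
        (mul_nonneg (by linarith) hN.le) hsqq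
    have hrhs : 1 - (1/2)/(1+K2) = (1+2*K2)/(2*(1+K2)) := by
      field_simp; ring
    have h3 : (-lam*A)/N ≤ (1+2*K2)/(2*(1+K2)) := by
      rw [div_le_div_iff₀ hN (by linarith : (0:ℝ) < 2*(1+K2))]
      linarith [key2]
    have heq : (-lam*A)/N = -(lam*A/N) := by ring
    linarith [h3, hrhs ▸ h3]

/-- Lemma 10: a lower bound on the cosine of the angle between `a` and any nonzero
direction in the normal cone at a suboptimal vertex `v`. -/
theorem cone_angle_bound {d : ℕ}
    (V : Finset (EuclideanSpace ℝ (Fin d)))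
    (P : Set (EuclideanSpace ℝ (Fin d)))
    (hP : P = convexHull ℝ (V : Set (EuclideanSpace ℝ (Fin d))))
    (D : ℝ) (hD : IsGreatest {r : ℝ | ∃ x ∈ P, ∃ y ∈ P, r = ‖x - y‖} D)
    (a : EuclideanSpace ℝ (Fin d)) (ha : a ≠ 0)
    (v1 : EuclideanSpace ℝ (Fin d)) (hv1 : v1 ∈ V)
    (hv1min : ∀ z ∈ P, ⟪a, v1⟫ ≤ ⟪a, z⟫)
    (v : EuclideanSpace ℝ (Fin d)) (hv : v ∈ V)
    (hΔv : 0 < ⟪a, v - v1⟫) :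
    (∀ u ∈ normalCone P v, u ≠ 0 →
      (1 / 2) / (1 + D ^ 2 * ‖a‖ ^ 2 / ⟪a, v - v1⟫ ^ 2) - 1 ≤
        ⟪a, u⟫ / (‖a‖ * ‖u‖)) ∧
    -1 < (1 / 2) / (1 + D ^ 2 * ‖a‖ ^ 2 / ⟪a, v - v1⟫ ^ 2) - 1 := by
  have hA : (0:ℝ) < ‖a‖ := norm_pos_iff.mpr ha
  have hvP : v ∈ P := hP ▸ subset_convexHull ℝ _ (Finset.mem_coe.mpr hv)
  have hv1P : v1 ∈ P := hP ▸ subset_convexHull ℝ _ (Finset.mem_coe.mpr hv1)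
  have hDv : ‖v - v1‖ ≤ D := hD.2 ⟨v, hvP, v1, hv1P, rfl⟩
  constructor
  · intro u hu hu0
    have hN : (0:ℝ) < ‖u‖ := norm_pos_iff.mpr hu0
    set lam : ℝ := ⟪a, u⟫ / ‖a‖^2 with hlamdef
    set r : EuclideanSpace ℝ (Fin d) := u - lam • a with hrdef
    have hra : ⟪a, r⟫ = 0 := by
      rw [hrdef, inner_sub_right, real_inner_smul_right, real_inner_self_eq_norm_sq,
        hlamdef, div_mul_cancel₀ _ (by positivity : ‖a‖^2 ≠ 0), sub_self]
    have hu_decomp : u = lam • a + r := by rw [hrdef]; abel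
    have hNsq : ‖u‖^2 = lam^2*‖a‖^2 + ‖r‖^2 := by
      have h : ‖u‖ = ‖lam • a + r‖ := by rw [← hu_decomp]
      rw [h, norm_add_sq_real, real_inner_smul_left, hra, norm_smul]
      simp [mul_pow, sq_abs]
    have hinner : ⟪a, u⟫ = lam * ‖a‖^2 := by
      rw [hlamdef, div_mul_cancel₀ _ (by positivity : ‖a‖^2 ≠ 0)]
    have hmono : ⟪u, v1⟫ ≤ ⟪u, v⟫ := hu v1 hv1P
    have hexp : ⟪u, v - v1⟫ = lam * ⟪a, v - v1⟫ + ⟪r, v - v1⟫ := by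
      nth_rewrite 1 [hu_decomp]
      rw [inner_add_left, real_inner_smul_left]
    have h1 : 0 ≤ lam * ⟪a, v - v1⟫ + ⟪r, v - v1⟫ := by
      rw [← hexp, inner_sub_right]; linarith
    have h2 : ⟪r, v - v1⟫ ≤ ‖r‖ * D := by
      refine le_trans (real_inner_le_norm r (v - v1)) ?_
      exact mul_le_mul_of_nonneg_left hDv (norm_nonneg r)
    have hmain : -(lam * ⟪a, v - v1⟫) ≤ ‖r‖ * D := by linarith
    have hgoal_eq : ⟪a, u⟫ / (‖a‖ * ‖u‖) = lam * ‖a‖ / ‖u‖ := by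
      rw [hinner]; field_simp
    rw [hgoal_eq]
    exact cone_key ‖a‖ ⟪a, v - v1⟫ D ‖r‖ ‖u‖ lam hA hΔv hN (norm_nonneg r) hNsq hmain
  · have hpos : 0 < (1 / 2) / (1 + D ^ 2 * ‖a‖ ^ 2 / ⟪a, v - v1⟫ ^ 2) := by
      apply div_pos one_half_pos
      have : 0 ≤ D ^ 2 * ‖a‖ ^ 2 / ⟪a, v - v1⟫ ^ 2 := by positivity
      linarith
    linarith
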